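/- Let {τ_n}_{n≥1} be the unique normalized Markov trace on the Iwahori–Hecke algebras {H_n}_{n≥1}, with τ_0 := id. For any n ≥ 1, any d-composition μ of n and any x_1⊗⋯⊗x_d ∈ H^μ (viewed inside H_n), one has τ_n(x_1⊗⋯⊗x_d) = (v^{−1}(1−u^2))^{|[μ]|−1}·τ_{μ_1}(x_1)⋯τ_{μ_d}(x_d), where |[μ]| is the number of non-zero parts of μ. -/

import Mathlib

noncomputable section

open scoped TensorProduct
open Finset CategoryTheory

namespace YH

/-! ### Ground rings:
`RR = ℂ[u^{±1}, v]`, `LL = ℂ[u^{±1}, v^{±1}]`, `GG = ℂ[u^{±1}, v^{±1}, γ^{±1}]`. -/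

abbrev RR : Type := AddMonoidAlgebra ℂ (ℤ × ℕ)
abbrev LL : Type := AddMonoidAlgebra ℂ (ℤ × ℤ)
abbrev GG : Type := AddMonoidAlgebra ℂ (ℤ × ℤ × ℤ)

def uR : RR := AddMonoidAlgebra.of' ℂ (ℤ × ℕ) (1, 0)
def uRi : RR := AddMonoidAlgebra.of' ℂ (ℤ × ℕ) (-1, 0)
def vR : RR := AddMonoidAlgebra.of' ℂ (ℤ × ℕ) (0, 1)

def uL : LL := AddMonoidAlgebra.of' ℂ (ℤ × ℤ) (1, 0)
def uLi : LL := AddMonoidAlgebra.of' ℂ (ℤ × ℤ) (-1, 0)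
def vL : LL := AddMonoidAlgebra.of' ℂ (ℤ × ℤ) (0, 1)
def vLi : LL := AddMonoidAlgebra.of' ℂ (ℤ × ℤ) (0, -1)

def uG : GG := AddMonoidAlgebra.of' ℂ (ℤ × ℤ × ℤ) (1, 0, 0)
def uGi : GG := AddMonoidAlgebra.of' ℂ (ℤ × ℤ × ℤ) (-1, 0, 0)
def vG : GG := AddMonoidAlgebra.of' ℂ (ℤ × ℤ × ℤ) (0, 1, 0)
def vGi : GG := AddMonoidAlgebra.of' ℂ (ℤ × ℤ × ℤ) (0, -1, 0)
def gG : GG := AddMonoidAlgebra.of' ℂ (ℤ × ℤ × ℤ) (0, 0, 1)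
def gGi : GG := AddMonoidAlgebra.of' ℂ (ℤ × ℤ × ℤ) (0, 0, -1)

/-- The canonical embedding `ℂ[u^{±1},v^{±1}] → ℂ[u^{±1},v^{±1},γ^{±1}]`. -/
def embLG : LL →+* GG :=
  AddMonoidAlgebra.mapDomainRingHom ℂ
    ((AddMonoidHom.id ℤ).prodMap (AddMonoidHom.inl ℤ ℤ))

/-! ### Symmetric group combinatorics -/

/-- The simple transposition `s_i = (i, i+1)` (0-based), or `1` if out of range. -/
def sw {n : ℕ} (i : ℕ) : Equiv.Perm (Fin n) :=
  if h : i + 1 < n then Equiv.swap ⟨i, Nat.lt_of_succ_lt h⟩ ⟨i + 1, h⟩ else 1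

/-- The Coxeter length of a permutation = its number of inversions. -/
def pLen {n : ℕ} (w : Equiv.Perm (Fin n)) : ℕ :=
  ((Finset.univ : Finset (Fin n × Fin n)).filter
    (fun p => p.1 < p.2 ∧ w p.2 < w p.1)).card

def isDescent {n : ℕ} (w : Equiv.Perm (Fin n)) (i : ℕ) : Bool :=
  if h : i + 1 < n then decide (w ⟨i + 1, h⟩ < w ⟨i, Nat.lt_of_succ_lt h⟩) else false

def wordAux {n : ℕ} : ℕ → Equiv.Perm (Fin n) → List ℕ
  | 0, _ => []
  | fuel + 1, w =>
    match (List.range n).find? (fun i => isDescent w i) with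
    | none => []
    | some i => wordAux fuel (w * sw i) ++ [i]

/-- A canonical reduced word for a permutation. -/
def redWord {n : ℕ} (w : Equiv.Perm (Fin n)) : List ℕ := wordAux (n * n) w

/-- The natural extension of a permutation of `Fin n` to `Fin (n+1)` (fixing the last point). -/
def extPerm {n : ℕ} (w : Equiv.Perm (Fin n)) : Equiv.Perm (Fin (n + 1)) :=
  (Equiv.permCongr (finSuccEquivLast (n := n))).symm (Equiv.optionCongr w)

/-- The cycle `(p, p+1, …, n)` (0-based) in `S_{n+1}`, mapping `x ↦ x+1` for `p ≤ x < n`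
and `n ↦ p`. -/
def shiftCycle (n p : ℕ) : Equiv.Perm (Fin (n + 1)) :=
  ((List.range' p (n - p)).map (fun i => sw (n := n + 1) i)).prod

/-! ### The Iwahori–Hecke algebra of type A (presented over any commutative ring) -/

inductive HRel (A : Type) [CommRing A] (u v : A) (n : ℕ) :
    FreeAlgebra A ℕ → FreeAlgebra A ℕ → Prop
  | comm (i j : ℕ) (hij : i + 1 < j) (hj : j + 1 < n) :
      HRel A u v n (FreeAlgebra.ι A i * FreeAlgebra.ι A j)
        (FreeAlgebra.ι A j * FreeAlgebra.ι A i)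
  | braid (i : ℕ) (h : i + 2 < n) :
      HRel A u v n
        (FreeAlgebra.ι A i * FreeAlgebra.ι A (i + 1) * FreeAlgebra.ι A i)
        (FreeAlgebra.ι A (i + 1) * FreeAlgebra.ι A i * FreeAlgebra.ι A (i + 1))
  | quad (i : ℕ) (h : i + 1 < n) :
      HRel A u v n (FreeAlgebra.ι A i * FreeAlgebra.ι A i)
        (algebraMap A (FreeAlgebra A ℕ) (u ^ 2) +
          algebraMap A (FreeAlgebra A ℕ) v * FreeAlgebra.ι A i)
  | kill (i : ℕ) (h : ¬ i + 1 < n) : HRel A u v n (FreeAlgebra.ι A i) 0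

/-- The Iwahori–Hecke algebra `H_n` with generators `T_0, …, T_{n-2}` (0-based indexing
of the `n-1` generators `T_1, …, T_{n-1}` of the paper). -/
abbrev Hecke (A : Type) [CommRing A] (u v : A) (n : ℕ) : Type := RingQuot (HRel A u v n)

/-- The generator `T_i` of the Iwahori–Hecke algebra. -/
def HT (A : Type) [CommRing A] (u v : A) (n i : ℕ) : Hecke A u v n :=
  RingQuot.mkAlgHom A (HRel A u v n) (FreeAlgebra.ι A i)

/-- `T_w` for a permutation `w`, via a (canonical) reduced word. -/
def HTw (A : Type) [CommRing A] (u v : A) (n : ℕ) (w : Equiv.Perm (Fin n)) :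
    Hecke A u v n :=
  ((redWord w).map (fun i => HT A u v n i)).prod

/-- `T̃_w = u^{-ℓ(w)} T_w`; here `ui` is the inverse of `u`. -/
def HTt (A : Type) [CommRing A] (u v ui : A) (n : ℕ) (w : Equiv.Perm (Fin n)) :
    Hecke A u v n :=
  algebraMap A (Hecke A u v n) (ui ^ pLen w) * HTw A u v n w

/-- `f : H_m → H_n` is the block embedding at offset `off` if it sends `T_i` to `T_{off+i}`. -/
def IsBlockEmb (A : Type) [CommRing A] (u v : A) (m n off : ℕ)
    (f : Hecke A u v m →ₐ[A] Hecke A u v n) : Prop :=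
  ∀ i, i + 1 < m → f (HT A u v m i) = HT A u v n (off + i)

/-! ### Compositions -/

/-- The set of `d`-compositions of `n`. -/
def compD (d n : ℕ) : Finset (Fin d → ℕ) := Finset.Nat.antidiagonalTuple d n

/-- `μ_1 + ⋯ + μ_a` (sum of the parts with index `≤ a`). -/
def psumLe {d : ℕ} (μ : Fin d → ℕ) (a : Fin d) : ℕ :=
  ∑ b ∈ Finset.univ.filter (fun b : Fin d => b ≤ a), μ b

/-- `μ_1 + ⋯ + μ_{a-1}` (sum of the parts with index `< a`). -/
def psumLt {d : ℕ} (μ : Fin d → ℕ) (a : Fin d) : ℕ :=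
  ∑ b ∈ Finset.univ.filter (fun b : Fin d => b < a), μ b

/-- `μ^{[a]}` : add 1 to the `a`-th part. -/
def bump {d : ℕ} (μ : Fin d → ℕ) (a : Fin d) : Fin d → ℕ :=
  fun b => if b = a then μ b + 1 else μ b

/-- The base `[μ]` of a composition. -/
def base {d : ℕ} (μ : Fin d → ℕ) : Fin d → ℕ := fun a => if μ a = 0 then 0 else 1

/-- `Comp_d^0` : the set of nonzero `d`-compositions with all parts in `{0,1}`. -/
def comp0F (d : ℕ) : Finset (Fin d → ℕ) :=
  ((Finset.univ : Finset (Fin d → Bool)).image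
    (fun f a => if f a then 1 else 0)).filter (fun μ => μ ≠ fun _ => 0)

/-- The index set `I_μ` (0-based) of the generators of the Young subgroup/parabolic. -/
def Imu {d : ℕ} (μ : Fin d → ℕ) (n : ℕ) : Set ℕ :=
  {i | i + 1 < n ∧ ∀ a : Fin d, i + 1 ≠ psumLe μ a}

/-- The parabolic subalgebra `H^μ ⊆ H_n`. -/
def heckeSub (A : Type) [CommRing A] (u v : A) {d : ℕ} (μ : Fin d → ℕ) (n : ℕ) :
    Subalgebra A (Hecke A u v n) :=
  Algebra.adjoin A {x | ∃ i ∈ Imu μ n, x = HT A u v n i}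

/-! ### The Yokonuma–Hecke algebra -/

abbrev YGen : Type := ℕ ⊕ ℕ

def Fg (A : Type) [CommRing A] (i : ℕ) : FreeAlgebra A YGen :=
  FreeAlgebra.ι A (Sum.inl i)

def Ft (A : Type) [CommRing A] (j : ℕ) : FreeAlgebra A YGen :=
  FreeAlgebra.ι A (Sum.inr j)

/-- The element `e_i = (1/d) ∑_{0 ≤ s ≤ d-1} t_i^s t_{i+1}^{-s}` of the free algebra
(`t^{-s} = t^{(d-s) mod d}` since `t^d = 1`). -/
def Fe (A : Type) [CommRing A] [Algebra ℂ A] (d i : ℕ) : FreeAlgebra A YGen :=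
  algebraMap A (FreeAlgebra A YGen) (algebraMap ℂ A (d : ℂ)⁻¹) *
    ∑ s ∈ Finset.range d, Ft A i ^ s * Ft A (i + 1) ^ ((d - s) % d)

/-- `s_i(j)` on indices. -/
def swapN (i j k : ℕ) : ℕ := if k = i then j else if k = j then i else k

inductive YRel (A : Type) [CommRing A] [Algebra ℂ A] (u v : A) (d n : ℕ) :
    FreeAlgebra A YGen → FreeAlgebra A YGen → Prop
  | gcomm (i j : ℕ) (hij : i + 1 < j) (hj : j + 1 < n) :
      YRel A u v d n (Fg A i * Fg A j) (Fg A j * Fg A i)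
  | gbraid (i : ℕ) (h : i + 2 < n) :
      YRel A u v d n (Fg A i * Fg A (i + 1) * Fg A i)
        (Fg A (i + 1) * Fg A i * Fg A (i + 1))
  | tcomm (i j : ℕ) (hi : i < n) (hj : j < n) :
      YRel A u v d n (Ft A i * Ft A j) (Ft A j * Ft A i)
  | gtrel (i j : ℕ) (hi : i + 1 < n) (hj : j < n) :
      YRel A u v d n (Fg A i * Ft A j) (Ft A (swapN i (i + 1) j) * Fg A i)
  | tord (j : ℕ) (hj : j < n) : YRel A u v d n (Ft A j ^ d) 1
  | quad (i : ℕ) (h : i + 1 < n) :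
      YRel A u v d n (Fg A i * Fg A i)
        (algebraMap A (FreeAlgebra A YGen) (u ^ 2) +
          algebraMap A (FreeAlgebra A YGen) v * (Fe A d i * Fg A i))
  | gkill (i : ℕ) (h : ¬ i + 1 < n) : YRel A u v d n (Fg A i) 0
  | tkill (j : ℕ) (h : ¬ j < n) : YRel A u v d n (Ft A j) 1

/-- The Yokonuma–Hecke algebra `Y_{d,n}`, with generators `g_0, …, g_{n-2}` and
`t_0, …, t_{n-1}` (0-based reindexing of the paper's generators). -/
abbrev Yok (A : Type) [CommRing A] [Algebra ℂ A] (u v : A) (d n : ℕ) : Type :=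
  RingQuot (YRel A u v d n)

def yg (A : Type) [CommRing A] [Algebra ℂ A] (u v : A) (d n i : ℕ) : Yok A u v d n :=
  RingQuot.mkAlgHom A (YRel A u v d n) (Fg A i)

def yt (A : Type) [CommRing A] [Algebra ℂ A] (u v : A) (d n j : ℕ) : Yok A u v d n :=
  RingQuot.mkAlgHom A (YRel A u v d n) (Ft A j)

def ye (A : Type) [CommRing A] [Algebra ℂ A] (u v : A) (d n i : ℕ) : Yok A u v d n :=
  RingQuot.mkAlgHom A (YRel A u v d n) (Fe A d i)

/-- `g_w` via a canonical reduced word. -/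
def ygw (A : Type) [CommRing A] [Algebra ℂ A] (u v : A) (d n : ℕ)
    (w : Equiv.Perm (Fin n)) : Yok A u v d n :=
  ((redWord w).map (fun i => yg A u v d n i)).prod

/-- `g̃_w = u^{-ℓ(w)} g_w`; here `ui` is the inverse of `u`. -/
def ygt (A : Type) [CommRing A] [Algebra ℂ A] (u v ui : A) (d n : ℕ)
    (w : Equiv.Perm (Fin n)) : Yok A u v d n :=
  algebraMap A (Yok A u v d n) (ui ^ pLen w) * ygw A u v d n w

/-! ### Characters of `(ℤ/dℤ)^n` and idempotents -/

/-- A character of `(ℤ/dℤ)^n`, recorded by the exponents `k_j` with `χ(t_j) = ξ^{k_j}`. -/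
abbrev Char (d n : ℕ) : Type := Fin n → ZMod d

/-- A primitive `d`-th root of unity. -/
def xi (d : ℕ) : ℂ := Complex.exp (2 * Real.pi * Complex.I / d)

/-- The action of `S_n` on characters : `w(χ)(t_j) = χ(t_{w^{-1}(j)})`. -/
def permAct {d n : ℕ} (w : Equiv.Perm (Fin n)) (χ : Char d n) : Char d n :=
  fun j => χ (w⁻¹ j)

/-- `Comp(χ)`, the composition of `n` counting how many `t_j` take each character value. -/
def compOf {d n : ℕ} [NeZero d] (χ : Char d n) : Fin d → ℕ :=
  fun a => (Finset.univ.filter (fun j : Fin n => χ j = ((a : ℕ) : ZMod d))).card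

/-- The block of position `j` in the composition `μ`. -/
def blockOf {d : ℕ} (μ : Fin d → ℕ) (j : ℕ) : ZMod d :=
  (((Finset.univ.filter (fun a : Fin d => psumLe μ a ≤ j)).card : ℕ) : ZMod d)

/-- The distinguished character `χ_1^μ` of the orbit attached to `μ`. -/
def chiOne {d : ℕ} (μ : Fin d → ℕ) (n : ℕ) : Char d n := fun j => blockOf μ (j : ℕ)

/-- Extension of a character of `(ℤ/d)^n` to `(ℤ/d)^{n+1}` with last value `ξ_a`. -/
def extChar {d n : ℕ} (χ : Char d n) (a : Fin d) : Char d (n + 1) :=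
  fun j => if h : (j : ℕ) < n then χ ⟨j, h⟩ else ((a : ℕ) : ZMod d)

/-- Membership in the Young subgroup `S^μ` = stabiliser of `χ_1^μ`. -/
def IsYoung {d : ℕ} (μ : Fin d → ℕ) (n : ℕ) (w : Equiv.Perm (Fin n)) : Prop :=
  permAct w (chiOne μ n) = chiOne μ n

/-- The distinguished (minimal length) coset representative `π_χ` with
`π_χ(χ_1^μ) = χ`. -/
def piRep {d n : ℕ} (μ : Fin d → ℕ) (χ : Char d n) : Equiv.Perm (Fin n) :=
  if h : (Finset.univ.filter
      (fun w : Equiv.Perm (Fin n) => permAct w (chiOne μ n) = χ)).Nonempty then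
    (Finset.exists_min_image _ pLen h).choose
  else 1

/-- The primitive idempotent `E_χ` of `Y_{d,n}`. -/
def Echar (A : Type) [CommRing A] [Algebra ℂ A] (u v : A) (d n : ℕ) (χ : Char d n) :
    Yok A u v d n :=
  (((List.finRange n).map (fun j =>
    algebraMap A (Yok A u v d n) (algebraMap ℂ A (d : ℂ)⁻¹) *
      ∑ s ∈ Finset.range d,
        algebraMap A (Yok A u v d n) (algebraMap ℂ A (xi d ^ ((χ j).val * s))) *
          yt A u v d n j ^ ((d - s) % d))).prod)

/-- The central idempotent `E_μ`. -/
def Emu (A : Type) [CommRing A] [Algebra ℂ A] (u v : A) (d n : ℕ) [NeZero d]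
    (μ : Fin d → ℕ) : Yok A u v d n :=
  ∑ χ ∈ Finset.univ.filter (fun χ : Char d n => compOf χ = μ), Echar A u v d n χ

/-- The orbit `O(μ)`, as an index type of the matrix algebra. -/
abbrev OType (d n : ℕ) [NeZero d] (μ : Fin d → ℕ) : Type :=
  {χ : Char d n // compOf χ = μ}

/-- The defining property of the map `Ψ_μ : Y_{d,n} → Mat(H^μ)` (extended by `0` outside
`E_μ Y_{d,n}`, and with matrices indexed by all characters, supported on the orbit of `μ`). -/
def IsPsi (A : Type) [CommRing A] [Algebra ℂ A] (u v ui : A) (d n : ℕ) [NeZero d]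
    (μ : Fin d → ℕ)
    (Ψ : Yok A u v d n →ₗ[A] Matrix (Char d n) (Char d n) (Hecke A u v n)) : Prop :=
  ∀ (χ : Char d n) (w : Equiv.Perm (Fin n)),
    Ψ (Echar A u v d n χ * ygt A u v ui d n w) =
      if compOf χ = μ then
        Matrix.single χ (permAct w⁻¹ χ)
          (HTt A u v ui n ((piRep μ χ)⁻¹ * w * piRep μ (permAct w⁻¹ χ)))
      else 0

/-! ### Markov traces -/

/-- Markov trace conditions (M1)-(M2) for a family of linear forms on the Iwahori–Hecke
algebras. Natural embeddings `H_n ⊆ H_{n+1}` are quantified through their values on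
generators. -/
def IsMarkovH (A : Type) [CommRing A] (u v : A)
    (τ : ∀ m, Hecke A u v m →ₗ[A] A) : Prop :=
  (∀ m, ∀ x y : Hecke A u v m, τ m (x * y) = τ m (y * x)) ∧
  (∀ n, ∀ f : Hecke A u v (n + 1) →ₐ[A] Hecke A u v (n + 2),
    (∀ i, i + 1 < n + 1 → f (HT A u v (n + 1) i) = HT A u v (n + 2) i) →
    ∀ x : Hecke A u v (n + 1),
      τ (n + 2) (f x * HT A u v (n + 2) n) = τ (n + 1) x ∧
      τ (n + 2) (f x * Ring.inverse (HT A u v (n + 2) n)) = τ (n + 1) x)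

/-- The unique normalised Markov trace, with the convention `τ_0 = id`. -/
def IsNormMarkovH (A : Type) [CommRing A] (u v : A)
    (τ : ∀ m, Hecke A u v m →ₗ[A] A) : Prop :=
  IsMarkovH A u v τ ∧ τ 1 1 = 1 ∧
    ∀ c : A, τ 0 (algebraMap A (Hecke A u v 0) c) = c

/-- The Markov condition (M2) for a family of linear forms on the Yokonuma–Hecke algebras. -/
def MarkovCondY (A : Type) [CommRing A] [Algebra ℂ A] (u v : A) (d : ℕ)
    (ρ : ∀ m, Yok A u v d m →ₗ[A] A) : Prop :=
  ∀ n, ∀ f : Yok A u v d (n + 1) →ₐ[A] Yok A u v d (n + 2),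
    ((∀ i, i + 1 < n + 1 → f (yg A u v d (n + 1) i) = yg A u v d (n + 2) i) ∧
     (∀ j, j < n + 1 → f (yt A u v d (n + 1) j) = yt A u v d (n + 2) j)) →
    ∀ x : Yok A u v d (n + 1),
      ρ (n + 2) (f x * yg A u v d (n + 2) n) = ρ (n + 1) x ∧
      ρ (n + 2) (f x * Ring.inverse (yg A u v d (n + 2) n)) = ρ (n + 1) x

/-- A Markov trace on the family of Yokonuma–Hecke algebras. -/
def IsMarkovY (A : Type) [CommRing A] [Algebra ℂ A] (u v : A) (d : ℕ)
    (ρ : ∀ m, Yok A u v d m →ₗ[A] A) : Prop :=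
  (∀ m, ∀ x y : Yok A u v d m, ρ m (x * y) = ρ m (y * x)) ∧ MarkovCondY A u v d ρ

/-- `θ` is the linear form `τ_{μ_1} ⊗ ⋯ ⊗ τ_{μ_d}` on `H^μ ⊆ H_n`. -/
def IsTensorTau (A : Type) [CommRing A] (u v : A)
    (τ : ∀ m, Hecke A u v m →ₗ[A] A) {d : ℕ} (μ : Fin d → ℕ) (n : ℕ)
    (θ : Hecke A u v n →ₗ[A] A) : Prop :=
  ∀ (x : ∀ a : Fin d, Hecke A u v (μ a))
    (f : ∀ a : Fin d, Hecke A u v (μ a) →ₐ[A] Hecke A u v n),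
    (∀ a, IsBlockEmb A u v (μ a) n (psumLt μ a) (f a)) →
    θ (((List.finRange d).map (fun a => f a (x a))).prod) =
      (((List.finRange d).map (fun a => τ (μ a) (x a))).prod)

/-! ### Framed and classical braid groups -/

def bs (i : ℕ) : FreeGroup (ℕ ⊕ ℕ) := FreeGroup.of (Sum.inl i)
def btf (j : ℕ) : FreeGroup (ℕ ⊕ ℕ) := FreeGroup.of (Sum.inr j)

inductive FBRel (d n : ℕ) : FreeGroup (ℕ ⊕ ℕ) → Prop
  | scomm (i j : ℕ) (hij : i + 1 < j) (hj : j + 1 < n) :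
      FBRel d n (bs i * bs j * (bs j * bs i)⁻¹)
  | sbraid (i : ℕ) (h : i + 2 < n) :
      FBRel d n (bs i * bs (i + 1) * bs i * (bs (i + 1) * bs i * bs (i + 1))⁻¹)
  | tcomm (i j : ℕ) (hi : i < n) (hj : j < n) :
      FBRel d n (btf i * btf j * (btf j * btf i)⁻¹)
  | strel (i j : ℕ) (hi : i + 1 < n) (hj : j < n) :
      FBRel d n (bs i * btf j * (btf (swapN i (i + 1) j) * bs i)⁻¹)
  | tord (j : ℕ) (hj : j < n) : FBRel d n (btf j ^ d)
  | skill (i : ℕ) (h : ¬ i + 1 < n) : FBRel d n (bs i)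
  | tkill (j : ℕ) (h : ¬ j < n) : FBRel d n (btf j)

/-- The `ℤ/dℤ`-framed braid group on `n` strands. -/
abbrev FB (d n : ℕ) : Type := PresentedGroup {w | FBRel d n w}

def fbs (d n : ℕ) (i : ℕ) : FB d n := PresentedGroup.of (Sum.inl i)
def fbt (d n : ℕ) (j : ℕ) : FB d n := PresentedGroup.of (Sum.inr j)

inductive CBRel (n : ℕ) : FreeGroup ℕ → Prop
  | comm (i j : ℕ) (hij : i + 1 < j) (hj : j + 1 < n) :
      CBRel n (FreeGroup.of i * FreeGroup.of j * (FreeGroup.of j * FreeGroup.of i)⁻¹)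
  | braid (i : ℕ) (h : i + 2 < n) :
      CBRel n (FreeGroup.of i * FreeGroup.of (i + 1) * FreeGroup.of i *
        (FreeGroup.of (i + 1) * FreeGroup.of i * FreeGroup.of (i + 1))⁻¹)
  | kill (i : ℕ) (h : ¬ i + 1 < n) : CBRel n (FreeGroup.of i)

/-- The classical braid group on `n` strands. -/
abbrev CB (n : ℕ) : Type := PresentedGroup {w | CBRel n w}

def cbs (n : ℕ) (i : ℕ) : CB n := PresentedGroup.of i

/-- The natural inclusion `FB(d,n) → FB(d,n+1)` (characterised on generators). -/
def InclFB (d n : ℕ) (J : FB d n →* FB d (n + 1)) : Prop :=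
  (∀ i, i + 1 < n → J (fbs d n i) = fbs d (n + 1) i) ∧
  (∀ j, j < n → J (fbt d n j) = fbt d (n + 1) j)

/-- Markov equivalence of framed braids (= isotopy of the closures, by the framed
Markov theorem): the equivalence generated by conjugation and stabilisation. -/
inductive MarkovEqF (d : ℕ) (J : ∀ n, FB d n →* FB d (n + 1)) :
    (Σ n, FB d n) → (Σ n, FB d n) → Prop
  | refl (x) : MarkovEqF d J x x
  | symm {x y} : MarkovEqF d J x y → MarkovEqF d J y x
  | trans {x y z} : MarkovEqF d J x y → MarkovEqF d J y z → MarkovEqF d J x z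
  | conj (n : ℕ) (α β : FB d n) : MarkovEqF d J ⟨n, α * β⟩ ⟨n, β * α⟩
  | stabPos (n : ℕ) (α : FB d (n + 1)) :
      MarkovEqF d J ⟨n + 2, J (n + 1) α * fbs d (n + 2) n⟩ ⟨n + 1, α⟩
  | stabNeg (n : ℕ) (α : FB d (n + 1)) :
      MarkovEqF d J ⟨n + 2, J (n + 1) α * (fbs d (n + 2) n)⁻¹⟩ ⟨n + 1, α⟩

/-- The defining property of the homomorphism `δ^γ : A[ℤ/dℤ ≀ B_n] → A Y_{d,n}`:
`σ_i ↦ (γ + (1-γ)e_i) g_i` and `t_j ↦ t_j`. -/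
def IsDeltaY (A : Type) [CommRing A] [Algebra ℂ A] (u v γ : A) (d n : ℕ)
    (h : MonoidAlgebra A (FB d n) →ₐ[A] Yok A u v d n) : Prop :=
  (∀ i, i + 1 < n →
    h (MonoidAlgebra.of A (FB d n) (fbs d n i)) =
      (algebraMap A (Yok A u v d n) γ +
        algebraMap A (Yok A u v d n) (1 - γ) * ye A u v d n i) * yg A u v d n i) ∧
  (∀ j, j < n → h (MonoidAlgebra.of A (FB d n) (fbt d n j)) = yt A u v d n j)

/-- `ch` is the base-change ring homomorphism `LL Y_{d,n} → GG Y_{d,n}` along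
`ℂ[u^{±1},v^{±1}] ⊆ ℂ[u^{±1},v^{±1},γ^{±1}]`. -/
def IsBaseChange (d n : ℕ) (ch : Yok LL uL vL d n →+* Yok GG uG vG d n) : Prop :=
  (∀ i, ch (yg LL uL vL d n i) = yg GG uG vG d n i) ∧
  (∀ j, ch (yt LL uL vL d n j) = yt GG uG vG d n j) ∧
  (∀ c : LL, ch (algebraMap LL (Yok LL uL vL d n) c) =
    algebraMap GG (Yok GG uG vG d n) (embLG c))

/-! ### Miscellaneous algebra notions -/

/-- Morita equivalence of two rings. -/
def MoritaEq (B C : Type) [Ring B] [Ring C] : Prop :=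
  Nonempty (ModuleCat.{0} B ≌ ModuleCat.{0} C)

/-- A `k`-algebra is split semisimple if it is isomorphic to a finite direct sum of
matrix algebras over `k`. -/
def IsSplitSS (k : Type) [Field k] (B : Type) [Ring B] [Algebra k B] : Prop :=
  ∃ (r : ℕ) (m : Fin r → ℕ),
    Nonempty (B ≃ₐ[k] ∀ i : Fin r, Matrix (Fin (m i)) (Fin (m i)) k)

/-- Primitive idempotent of a ring. -/
def IsPrimIdem (B : Type) [Ring B] (e : B) : Prop :=
  IsIdempotentElem e ∧ e ≠ 0 ∧
    ∀ f g : B, IsIdempotentElem f → IsIdempotentElem g → f * g = 0 → g * f = 0 →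
      e = f + g → f = 0 ∨ g = 0

/-! ### The Ariki–Koike algebra -/

inductive AKRel (A : Type) [CommRing A] (Q : ℕ → A) (d : ℕ) (x xinv : A) (n : ℕ) :
    FreeAlgebra A ℕ → FreeAlgebra A ℕ → Prop
  | braid (i : ℕ) (h1 : 1 ≤ i) (h : i + 1 < n) :
      AKRel A Q d x xinv n
        (FreeAlgebra.ι A i * FreeAlgebra.ι A (i + 1) * FreeAlgebra.ι A i)
        (FreeAlgebra.ι A (i + 1) * FreeAlgebra.ι A i * FreeAlgebra.ι A (i + 1))
  | braid0 (h : 1 < n) :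
      AKRel A Q d x xinv n
        (FreeAlgebra.ι A 0 * FreeAlgebra.ι A 1 * FreeAlgebra.ι A 0 * FreeAlgebra.ι A 1)
        (FreeAlgebra.ι A 1 * FreeAlgebra.ι A 0 * FreeAlgebra.ι A 1 * FreeAlgebra.ι A 0)
  | comm (i j : ℕ) (hij : i + 1 < j) (hj : j < n) :
      AKRel A Q d x xinv n (FreeAlgebra.ι A i * FreeAlgebra.ι A j)
        (FreeAlgebra.ι A j * FreeAlgebra.ι A i)
  | quad (i : ℕ) (h1 : 1 ≤ i) (h : i < n) :
      AKRel A Q d x xinv n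
        ((FreeAlgebra.ι A i - algebraMap A (FreeAlgebra A ℕ) x) *
          (FreeAlgebra.ι A i + algebraMap A (FreeAlgebra A ℕ) xinv)) 0
  | cyc (h : 0 < n) :
      AKRel A Q d x xinv n
        (((List.range d).map
          (fun b => FreeAlgebra.ι A 0 - algebraMap A (FreeAlgebra A ℕ) (Q b))).prod) 0
  | kill (i : ℕ) (h : ¬ i < n) : AKRel A Q d x xinv n (FreeAlgebra.ι A i) 0

/-- The Ariki–Koike algebra `H_n^{Q,x}`. -/
abbrev ArikiKoike (A : Type) [CommRing A] (Q : ℕ → A) (d : ℕ) (x xinv : A) (n : ℕ) :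
    Type := RingQuot (AKRel A Q d x xinv n)



/-!
Write `z = v⁻¹(1 - u²)`. Peeling off the first block reduces the claim to two blocks: for
`p + q = n` and `x ∈ H_p`, `y ∈ H_q` placed side by side in `H_n`,
`τ_n(x y) = z τ_p(x) τ_q(y)` when `p, q ≥ 1` (an empty block lives in `H_0`, which consists of
scalars, and contributes no factor `z`). The two-block formula is proved by induction on `q`,
using that `H_{q+1}` is spanned by `H_q` and `H_q T_q H_q`: on `H_q` the Markov property (M2)
for `T_{n-1}` and its inverse `u⁻²(T_{n-1} - v)` gives the stabilisation
`τ_n(w) = z τ_{n-1}(w)`; on `H_q T_q H_q` the trace property (M1) and (M2) remove `T_q`.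
-/

section Relations

variable {A : Type} [CommRing A] {u v : A} {n : ℕ}

theorem HT_mul_HT_comm {i j : ℕ} (hij : i + 1 < j) (hj : j + 1 < n) :
    HT A u v n i * HT A u v n j = HT A u v n j * HT A u v n i := by
  simpa [HT] using RingQuot.mkAlgHom_rel A (HRel.comm (u := u) (v := v) i j hij hj)

theorem HT_braid {i : ℕ} (h : i + 2 < n) :
    HT A u v n i * HT A u v n (i + 1) * HT A u v n i =
      HT A u v n (i + 1) * HT A u v n i * HT A u v n (i + 1) := by
  simpa [HT] using RingQuot.mkAlgHom_rel A (HRel.braid (u := u) (v := v) i h)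

theorem HT_mul_self {i : ℕ} (h : i + 1 < n) :
    HT A u v n i * HT A u v n i =
      algebraMap A (Hecke A u v n) (u ^ 2) + algebraMap A (Hecke A u v n) v * HT A u v n i := by
  simpa [HT] using RingQuot.mkAlgHom_rel A (HRel.quad (u := u) (v := v) i h)

theorem HT_eq_zero {i : ℕ} (h : ¬ i + 1 < n) : HT A u v n i = 0 := by
  simpa [HT] using RingQuot.mkAlgHom_rel A (HRel.kill (u := u) (v := v) (n := n) i h)

theorem Hecke.induction {P : Hecke A u v n → Prop}
    (algebraMap : ∀ c : A, P (algebraMap A (Hecke A u v n) c))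
    (generator : ∀ i, P (HT A u v n i))
    (add : ∀ x y, P x → P y → P (x + y))
    (mul : ∀ x y, P x → P y → P (x * y)) (x : Hecke A u v n) : P x := by
  obtain ⟨y, rfl⟩ := RingQuot.mkAlgHom_surjective A (HRel A u v n) x
  induction y using FreeAlgebra.induction with
  | grade0 c => simpa using algebraMap c
  | grade1 i => exact generator i
  | add a b ha hb => rw [map_add]; exact add _ _ ha hb
  | mul a b ha hb => rw [map_mul]; exact mul _ _ ha hb

theorem Hecke.exists_eq_algebraMap (hn : n ≤ 1) (x : Hecke A u v n) :
    ∃ c : A, x = algebraMap A (Hecke A u v n) c := by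
  induction x using Hecke.induction with
  | algebraMap c => exact ⟨c, rfl⟩
  | generator i => exact ⟨0, by rw [HT_eq_zero (by omega), map_zero]⟩
  | add x y hx hy =>
    obtain ⟨c, rfl⟩ := hx
    obtain ⟨c', rfl⟩ := hy
    exact ⟨c + c', (map_add _ c c').symm⟩
  | mul x y hx hy =>
    obtain ⟨c, rfl⟩ := hx
    obtain ⟨c', rfl⟩ := hy
    exact ⟨c * c', (map_mul _ c c').symm⟩

theorem Hecke.algHom_ext {B : Type} [Semiring B] [Algebra A B]
    {f g : Hecke A u v n →ₐ[A] B} (h : ∀ i, f (HT A u v n i) = g (HT A u v n i)) : f = g :=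
  RingQuot.ringQuot_ext' A f g (FreeAlgebra.hom_ext (funext h))

end Relations

section BlockEmbedding

variable (A : Type) [CommRing A] (u v : A)

def blockEmb (m n off : ℕ) (h : off + m ≤ n) : Hecke A u v m →ₐ[A] Hecke A u v n :=
  RingQuot.liftAlgHom A
    ⟨FreeAlgebra.lift A (fun i => if i + 1 < m then HT A u v n (off + i) else 0), by
      intro a b hab
      induction hab with
      | comm i j hij hj =>
        simp only [map_mul, FreeAlgebra.lift_ι_apply, if_pos (show i + 1 < m by omega),
          if_pos hj]
        exact HT_mul_HT_comm (by omega) (by omega)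
      | braid i hi =>
        simp only [map_mul, FreeAlgebra.lift_ι_apply, if_pos (show i + 1 < m by omega),
          if_pos (show i + 1 + 1 < m by omega), ← add_assoc]
        exact HT_braid (by omega)
      | quad i hi =>
        simp only [map_mul, map_add, FreeAlgebra.lift_ι_apply, if_pos hi, AlgHom.commutes]
        exact HT_mul_self (by omega)
      | kill i hi => simp only [FreeAlgebra.lift_ι_apply, if_neg hi, map_zero]⟩

variable {A u v}

theorem blockEmb_HT {m n off : ℕ} (h : off + m ≤ n) {i : ℕ} (hi : i + 1 < m) :
    blockEmb A u v m n off h (HT A u v m i) = HT A u v n (off + i) := by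
  simp [blockEmb, HT, if_pos hi]

theorem isBlockEmb_blockEmb {m n off : ℕ} (h : off + m ≤ n) :
    IsBlockEmb A u v m n off (blockEmb A u v m n off h) :=
  fun _ hi => blockEmb_HT h hi

theorem IsBlockEmb.eq {m n off : ℕ} {f g : Hecke A u v m →ₐ[A] Hecke A u v n}
    (hf : IsBlockEmb A u v m n off f) (hg : IsBlockEmb A u v m n off g) : f = g := by
  refine Hecke.algHom_ext fun i => ?_
  by_cases hi : i + 1 < m
  · rw [hf i hi, hg i hi]
  · rw [HT_eq_zero hi, map_zero, map_zero]

theorem IsBlockEmb.comp {m m' n off off' : ℕ} {g : Hecke A u v m →ₐ[A] Hecke A u v m'}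
    {f : Hecke A u v m' →ₐ[A] Hecke A u v n} (hf : IsBlockEmb A u v m' n off' f)
    (hg : IsBlockEmb A u v m m' off g) (h : off + m ≤ m') :
    IsBlockEmb A u v m n (off' + off) (f.comp g) := by
  intro i hi
  rw [AlgHom.comp_apply, hg i hi, hf _ (by omega), add_assoc]

theorem blockEmb_comp_blockEmb {m m' n off off' off'' : ℕ} (h : off + m ≤ m')
    (h' : off' + m' ≤ n) (h'' : off'' + m ≤ n) (hoff : off' + off = off'') :
    (blockEmb A u v m' n off' h').comp (blockEmb A u v m m' off h) = blockEmb A u v m n off'' h'' :=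
  IsBlockEmb.eq (hoff ▸ IsBlockEmb.comp (isBlockEmb_blockEmb h') (isBlockEmb_blockEmb h) h)
    (isBlockEmb_blockEmb _)

theorem blockEmb_self (n : ℕ) : blockEmb A u v n n 0 (by omega) = AlgHom.id A (Hecke A u v n) :=
  IsBlockEmb.eq (isBlockEmb_blockEmb _) fun i _ => by rw [AlgHom.id_apply, zero_add]

theorem commute_blockEmb_HT {m n j : ℕ} (h : 0 + m ≤ n) (hmj : m ≤ j) (hj : j + 1 < n)
    (x : Hecke A u v m) : Commute (blockEmb A u v m n 0 h x) (HT A u v n j) := by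
  induction x using Hecke.induction with
  | algebraMap c => rw [AlgHom.commutes]; exact Algebra.commutes c _
  | generator i =>
    by_cases hi : i + 1 < m
    · rw [blockEmb_HT h hi, zero_add]
      exact HT_mul_HT_comm (by omega) hj
    · rw [HT_eq_zero hi, map_zero]
      exact Commute.zero_left _
  | add x y hx hy => rw [map_add]; exact hx.add_left hy
  | mul x y hx hy => rw [map_mul]; exact hx.mul_left hy

end BlockEmbedding

section Spanning

variable (A : Type) [CommRing A] (u v : A)

def incl (p : ℕ) : Hecke A u v p →ₐ[A] Hecke A u v (p + 1) :=
  blockEmb A u v p (p + 1) 0 (by omega)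

/-- `H_p ∪ H_p T_p H_p ⊆ H_{p+1}` in the paper's notation: the generators are 0-based, so the
paper's `T_p` is `HT A u v (p + 1) (p - 1)`. -/
def inclSpanSet (p : ℕ) : Set (Hecke A u v (p + 1)) :=
  Set.range (incl A u v p) ∪
    {y | ∃ a b, y = incl A u v p a * HT A u v (p + 1) (p - 1) * incl A u v p b}

variable {A u v}

theorem incl_HT {p i : ℕ} (hi : i + 1 ≠ p) :
    incl A u v p (HT A u v p i) = HT A u v (p + 1) i := by
  rcases lt_or_gt_of_ne hi with hi | hi
  · rw [incl, blockEmb_HT _ hi, zero_add]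
  · rw [HT_eq_zero (by omega), HT_eq_zero (by omega), map_zero]

theorem incl_blockEmb {m n off : ℕ} (h : off + m ≤ n) (x : Hecke A u v m) :
    incl A u v n (blockEmb A u v m n off h x) = blockEmb A u v m (n + 1) off (by omega) x :=
  DFunLike.congr_fun (blockEmb_comp_blockEmb h (by omega) (by omega) (zero_add off)) x

theorem blockEmb_incl {m n off : ℕ} (h : off + (m + 1) ≤ n) (x : Hecke A u v m) :
    blockEmb A u v (m + 1) n off h (incl A u v m x) = blockEmb A u v m n off (by omega) x :=
  DFunLike.congr_fun (blockEmb_comp_blockEmb (by omega) h (by omega) (add_zero off)) x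

theorem incl_mem_span {p : ℕ} (a : Hecke A u v p) :
    incl A u v p a ∈ Submodule.span A (inclSpanSet A u v p) :=
  Submodule.subset_span (Or.inl ⟨a, rfl⟩)

theorem incl_mul_HT_mul_incl_mem_span {p : ℕ} (a b : Hecke A u v p) :
    incl A u v p a * HT A u v (p + 1) (p - 1) * incl A u v p b ∈
      Submodule.span A (inclSpanSet A u v p) :=
  Submodule.subset_span (Or.inr ⟨a, b, rfl⟩)

theorem incl_mul_mul_incl_mem_span {p : ℕ} (a b : Hecke A u v p) {y : Hecke A u v (p + 1)}
    (hy : y ∈ Submodule.span A (inclSpanSet A u v p)) :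
    incl A u v p a * y * incl A u v p b ∈ Submodule.span A (inclSpanSet A u v p) := by
  refine (Submodule.map_span_le (LinearMap.mulLeftRight A (incl A u v p a, incl A u v p b))
    _ _).mpr ?_ (Submodule.mem_map_of_mem hy)
  rintro _ (⟨c, rfl⟩ | ⟨c, c', rfl⟩)
  · simpa only [LinearMap.mulLeftRight_apply, ← map_mul] using incl_mem_span (a * c * b)
  · simpa only [LinearMap.mulLeftRight_apply, map_mul, mul_assoc] using
      incl_mul_HT_mul_incl_mem_span (a * c) (c' * b)

/-- For the top generator `T` of `H_{q+2}`: write `H_{q+1} = H_q + H_q T' H_q` (hypothesis `ih`)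
and use `T² = u² + vT` and `T T' T = T' T T'`. -/
theorem HT_mul_incl_mul_HT_mem_span {q : ℕ}
    (ih : Submodule.span A (inclSpanSet A u v q) = ⊤) (b : Hecke A u v (q + 1)) :
    HT A u v (q + 2) q * incl A u v (q + 1) b * HT A u v (q + 2) q ∈
      Submodule.span A (inclSpanSet A u v (q + 1)) := by
  have hcomm (c : Hecke A u v q) :
      Commute (incl A u v (q + 1) (incl A u v q c)) (HT A u v (q + 2) q) := by
    change Commute (incl A u v (q + 1) (blockEmb A u v q (q + 1) 0 (by omega) c)) _
    rw [incl_blockEmb]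
    exact commute_blockEmb_HT _ (by omega) (by omega) c
  set T := HT A u v (q + 2) q
  set ι := incl A u v (q + 1)
  have hb : b ∈ Submodule.span A (inclSpanSet A u v q) := ih ▸ Submodule.mem_top
  refine (Submodule.map_span_le (LinearMap.mulLeftRight A (T, T) ∘ₗ ι.toLinearMap) _ _).mpr
    ?_ (Submodule.mem_map_of_mem hb)
  rintro _ (⟨c, rfl⟩ | ⟨c, c', rfl⟩)
  · have hT : T * T = algebraMap A _ (u ^ 2) + algebraMap A _ v * T := HT_mul_self (by omega)
    simp only [LinearMap.comp_apply, AlgHom.toLinearMap_apply, LinearMap.mulLeftRight_apply]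
    rw [← (hcomm c).eq, mul_assoc, hT, mul_add, ← Algebra.commutes, ← Algebra.smul_def,
      ← mul_assoc, ← Algebra.commutes, mul_assoc, ← Algebra.smul_def]
    refine add_mem (Submodule.smul_mem _ _ (incl_mem_span _)) (Submodule.smul_mem _ _ ?_)
    have h := incl_mul_HT_mul_incl_mem_span (incl A u v q c) 1
    rwa [map_one, mul_one] at h
  · rcases Nat.eq_zero_or_pos q with rfl | hq
    · rw [HT_eq_zero (by omega : ¬ 0 - 1 + 1 < 0 + 1)]
      simp
    obtain ⟨i, rfl⟩ : ∃ i, q = i + 1 := ⟨q - 1, by omega⟩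
    have hT' : ι (HT A u v (i + 1 + 1) (i + 1 - 1)) = HT A u v (i + 1 + 2) i := incl_HT (by omega)
    have key : T * ι (incl A u v (i + 1) c * HT A u v (i + 1 + 1) (i + 1 - 1) *
          incl A u v (i + 1) c') * T =
        ι (incl A u v (i + 1) c * HT A u v (i + 1 + 1) (i + 1 - 1)) * T *
          ι (HT A u v (i + 1 + 1) (i + 1 - 1) * incl A u v (i + 1) c') := by
      simp only [map_mul, hT']
      calc T * (ι (incl A u v (i + 1) c) * HT A u v (i + 1 + 2) i * ι (incl A u v (i + 1) c')) * T
          = ι (incl A u v (i + 1) c) * (T * HT A u v (i + 1 + 2) i * T) *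
              ι (incl A u v (i + 1) c') := by
            simp only [← mul_assoc, (hcomm c).eq]
            simp only [mul_assoc, (hcomm c').eq]
        _ = _ := by rw [← HT_braid (by omega)]; simp only [mul_assoc]; rfl
    simp only [LinearMap.comp_apply, AlgHom.toLinearMap_apply, LinearMap.mulLeftRight_apply]
    rw [key]
    exact incl_mul_HT_mul_incl_mem_span _ _

theorem span_inclSpanSet (p : ℕ) : Submodule.span A (inclSpanSet A u v p) = ⊤ := by
  induction p with
  | zero =>
    refine eq_top_iff.mpr fun y _ => ?_
    obtain ⟨c, rfl⟩ := Hecke.exists_eq_algebraMap le_rfl y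
    simpa only [AlgHom.commutes] using incl_mem_span (algebraMap A (Hecke A u v 0) c)
  | succ q ih =>
    set M := Submodule.span A (inclSpanSet A u v (q + 1))
    have mul_HT_mem (i : ℕ) {y} (hy : y ∈ M) : y * HT A u v (q + 2) i ∈ M := by
      by_cases hi : i = q
      · subst hi
        refine (Submodule.map_span_le (LinearMap.mulRight A _) _ _).mpr ?_
          (Submodule.mem_map_of_mem hy)
        rintro _ (⟨a, rfl⟩ | ⟨a, b, rfl⟩)
        · simpa using incl_mul_HT_mul_incl_mem_span a 1
        · have h := incl_mul_mul_incl_mem_span a 1 (HT_mul_incl_mul_HT_mem_span ih b)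
          simp only [map_one, mul_one, mul_assoc] at h
          simp only [LinearMap.mulRight_apply, mul_assoc]
          exact h
      · simpa only [map_one, one_mul, incl_HT (show i + 1 ≠ q + 1 by omega)] using
          incl_mul_mul_incl_mem_span 1 (HT A u v (q + 1) i) hy
    have mul_mem (y : Hecke A u v (q + 2)) : ∀ x ∈ M, x * y ∈ M := by
      induction y using Hecke.induction with
      | algebraMap c =>
        intro x hx
        simpa only [← Algebra.commutes, ← Algebra.smul_def] using M.smul_mem c hx
      | generator i => exact fun x hx => mul_HT_mem i hx
      | add y z hy hz => exact fun x hx => mul_add x y z ▸ add_mem (hy x hx) (hz x hx)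
      | mul y z hy hz => exact fun x hx => mul_assoc x y z ▸ hz _ (hy x hx)
    refine eq_top_iff.mpr fun y _ => ?_
    simpa using mul_mem y 1 (by simpa using incl_mem_span (1 : Hecke A u v (q + 1)))

end Spanning

section Markov

variable {A : Type} [CommRing A] {u v ui vi : A} {τ : ∀ m, Hecke A u v m →ₗ[A] A}

theorem ringInverse_HT (hu : u * ui = 1) {n i : ℕ} (hi : i + 1 < n) :
    Ring.inverse (HT A u v n i) =
      algebraMap A _ (ui ^ 2) * (HT A u v n i - algebraMap A _ v) := by
  have hT : HT A u v n i * (HT A u v n i - algebraMap A _ v) = algebraMap A _ (u ^ 2) := by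
    rw [mul_sub, HT_mul_self hi, Algebra.commutes, add_sub_cancel_right]
  have hui : algebraMap A (Hecke A u v n) (ui ^ 2) * algebraMap A _ (u ^ 2) = 1 := by
    rw [← map_mul, ← mul_pow, mul_comm, hu, one_pow, map_one]
  have h₁ : HT A u v n i * (algebraMap A _ (ui ^ 2) * (HT A u v n i - algebraMap A _ v)) = 1 := by
    rw [Algebra.left_comm, hT, hui]
  have h₂ : algebraMap A _ (ui ^ 2) * (HT A u v n i - algebraMap A _ v) * HT A u v n i = 1 := by
    rw [mul_assoc, sub_mul, Algebra.commutes v, ← mul_sub, hT, hui]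
  exact Ring.inverse_unit ⟨_, _, h₁, h₂⟩

theorem IsMarkovH.tau_incl_mul_HT (hτ : IsMarkovH A u v τ) {n : ℕ} (hn : n ≠ 0)
    (x : Hecke A u v n) : τ (n + 1) (incl A u v n x * HT A u v (n + 1) (n - 1)) = τ n x := by
  obtain ⟨p, rfl⟩ := Nat.exists_eq_succ_of_ne_zero hn
  exact (hτ.2 p _ (fun _ hi => incl_HT (by omega)) x).1

/-- (M2) for `T_n` and `T_n⁻¹ = u⁻²(T_n - v)` give two linear equations in `τ_{n+1}(x)`. -/
theorem IsMarkovH.tau_incl (hτ : IsMarkovH A u v τ) (hu : u * ui = 1) (hv : v * vi = 1)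
    {n : ℕ} (hn : n ≠ 0) (x : Hecke A u v n) :
    τ (n + 1) (incl A u v n x) = vi * (1 - u ^ 2) * τ n x := by
  obtain ⟨p, rfl⟩ : ∃ p, n = p + 1 := ⟨n - 1, by omega⟩
  have hT : τ (p + 2) (incl A u v (p + 1) x * HT A u v (p + 2) p) = τ (p + 1) x :=
    hτ.tau_incl_mul_HT hn x
  have h := (hτ.2 p _ (fun _ hi => incl_HT (by omega)) x).2
  rw [ringInverse_HT hu (by omega), Algebra.left_comm, mul_sub, ← Algebra.commutes,
    ← Algebra.smul_def, ← Algebra.smul_def, map_smul, map_sub, map_smul, hT, smul_eq_mul,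
    smul_eq_mul] at h
  linear_combination (-(u ^ 2 * vi)) * h + (vi * τ (p + 1) x * (u * ui + 1)) * hu
    - (τ (p + 2) (incl A u v (p + 1) x) * vi * (u * ui + 1) * v) * hu
    - τ (p + 2) (incl A u v (p + 1) x) * hv

theorem IsMarkovH.tau_incl_mul_HT_mul_incl (hτ : IsMarkovH A u v τ) {n : ℕ} (hn : n ≠ 0)
    (a b : Hecke A u v n) :
    τ (n + 1) (incl A u v n a * HT A u v (n + 1) (n - 1) * incl A u v n b) = τ n (b * a) := by
  rw [hτ.1, ← mul_assoc, ← map_mul, hτ.tau_incl_mul_HT hn]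

theorem IsNormMarkovH.tau_algebraMap (hτ : IsNormMarkovH A u v τ) {m : ℕ} (hm : m ≤ 1)
    (c : A) : τ m (algebraMap A _ c) = c := by
  interval_cases m
  · exact hτ.2.2 c
  · rw [Algebra.algebraMap_eq_smul_one, map_smul, hτ.2.1, smul_eq_mul, mul_one]

theorem IsNormMarkovH.eq_algebraMap_tau (hτ : IsNormMarkovH A u v τ) {m : ℕ} (hm : m ≤ 1)
    (x : Hecke A u v m) : x = algebraMap A _ (τ m x) := by
  obtain ⟨c, rfl⟩ := Hecke.exists_eq_algebraMap hm x
  rw [hτ.tau_algebraMap hm]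

/-- Induction on `k`: `H_{k+2}` is spanned by `H_{k+1}` and `H_{k+1} T H_{k+1}`; on the first part
the claim follows from stabilisation, on the second from (M1) and (M2). -/
theorem IsNormMarkovH.tau_blockEmb_mul_blockEmb_succ (hτ : IsNormMarkovH A u v τ)
    (hu : u * ui = 1) (hv : v * vi = 1) (p k : ℕ) (x : Hecke A u v (p + 1))
    (y : Hecke A u v (k + 1)) :
    τ (p + 1 + (k + 1)) (blockEmb A u v (p + 1) _ 0 (by omega) x *
        blockEmb A u v (k + 1) _ (p + 1) le_rfl y) =
      vi * (1 - u ^ 2) * τ (p + 1) x * τ (k + 1) y := by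
  induction k with
  | zero =>
    rw [hτ.eq_algebraMap_tau le_rfl y, AlgHom.commutes, ← Algebra.commutes, ← Algebra.smul_def,
      map_smul, hτ.tau_algebraMap le_rfl, smul_eq_mul]
    have hx := hτ.1.tau_incl hu hv p.succ_ne_zero x
    rw [incl] at hx
    rw [hx]
    ring
  | succ k ih =>
    set N := p + 1 + (k + 1)
    have hF : blockEmb A u v (p + 1) (N + 1) 0 (by omega) x =
        incl A u v N (blockEmb A u v (p + 1) N 0 (by omega) x) :=
      (incl_blockEmb _ x).symm
    have hG (a : Hecke A u v (k + 1)) :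
        blockEmb A u v (k + 1 + 1) (N + 1) (p + 1) (by omega) (incl A u v (k + 1) a) =
          incl A u v N (blockEmb A u v (k + 1) N (p + 1) le_rfl a) :=
      (blockEmb_incl _ a).trans (incl_blockEmb _ a).symm
    have hGT : blockEmb A u v (k + 1 + 1) (N + 1) (p + 1) (by omega)
        (HT A u v (k + 1 + 1) (k + 1 - 1)) = HT A u v (N + 1) (N - 1) :=
      blockEmb_HT _ (show k + 1 < k + 2 by omega)
    have hN : N ≠ 0 := by omega
    change τ (N + 1) (blockEmb A u v (p + 1) (N + 1) 0 (by omega) x *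
      blockEmb A u v (k + 1 + 1) (N + 1) (p + 1) (by omega) y) = _
    refine LinearMap.congr_fun (LinearMap.ext_on (span_inclSpanSet (k + 1))
      (f := τ (N + 1) ∘ₗ
        LinearMap.mulLeft A (blockEmb A u v (p + 1) (N + 1) 0 (by omega) x) ∘ₗ
        (blockEmb A u v (k + 1 + 1) (N + 1) (p + 1) (by omega)).toLinearMap)
      (g := (vi * (1 - u ^ 2) * τ (p + 1) x) • τ (k + 1 + 1)) ?_) y
    rintro _ (⟨a, rfl⟩ | ⟨a, b, rfl⟩)
    · simp only [LinearMap.comp_apply, AlgHom.toLinearMap_apply, LinearMap.mulLeft_apply,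
        LinearMap.smul_apply, smul_eq_mul]
      rw [hG, hF, ← map_mul, hτ.1.tau_incl hu hv hN, ih,
        hτ.1.tau_incl hu hv (by omega : k + 1 ≠ 0)]
      ring
    · simp only [LinearMap.comp_apply, AlgHom.toLinearMap_apply, LinearMap.mulLeft_apply,
        LinearMap.smul_apply, smul_eq_mul, map_mul]
      rw [hG, hG, hF, hGT, ← mul_assoc, ← mul_assoc, ← map_mul,
        hτ.1.tau_incl_mul_HT_mul_incl hN, hτ.1.tau_incl_mul_HT_mul_incl (by omega : k + 1 ≠ 0),
        mul_assoc, hτ.1.1 N, mul_assoc, ← map_mul, ih, hτ.1.1 _ a b, mul_assoc]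

theorem IsNormMarkovH.tau_blockEmb_mul_blockEmb (hτ : IsNormMarkovH A u v τ) (hu : u * ui = 1)
    (hv : v * vi = 1) {p q n : ℕ} (hpq : p + q = n) (x : Hecke A u v p) (y : Hecke A u v q) :
    τ n (blockEmb A u v p n 0 (by omega) x * blockEmb A u v q n p hpq.le y) =
      (if p ≠ 0 ∧ q ≠ 0 then vi * (1 - u ^ 2) else 1) * τ p x * τ q y := by
  rcases Nat.eq_zero_or_pos p with rfl | hp
  · obtain rfl : q = n := by omega
    rw [hτ.eq_algebraMap_tau zero_le_one x, AlgHom.commutes, blockEmb_self, AlgHom.id_apply,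
      ← Algebra.smul_def, map_smul, hτ.tau_algebraMap zero_le_one, smul_eq_mul]
    simp
  rcases Nat.eq_zero_or_pos q with rfl | hq
  · obtain rfl : p = n := by omega
    rw [hτ.eq_algebraMap_tau zero_le_one y, AlgHom.commutes, blockEmb_self, AlgHom.id_apply,
      ← Algebra.commutes, ← Algebra.smul_def, map_smul, hτ.tau_algebraMap zero_le_one,
      smul_eq_mul]
    simp [mul_comm]
  obtain ⟨p, rfl⟩ : ∃ p', p = p' + 1 := ⟨p - 1, by omega⟩
  obtain ⟨k, rfl⟩ : ∃ k, q = k + 1 := ⟨q - 1, by omega⟩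
  subst hpq
  rw [hτ.tau_blockEmb_mul_blockEmb_succ hu hv, if_pos ⟨by omega, by omega⟩]

end Markov

section Compositions

variable {d : ℕ}

theorem psumLt_zero (μ : Fin (d + 1) → ℕ) : psumLt μ 0 = 0 :=
  Finset.sum_eq_zero fun b hb => absurd (Finset.mem_filter.mp hb).2 (Fin.not_lt_zero b)

theorem psumLt_succ (μ : Fin (d + 1) → ℕ) (a : Fin d) :
    psumLt μ a.succ = μ 0 + psumLt (fun b => μ b.succ) a := by
  simp only [psumLt, Finset.sum_filter, Fin.sum_univ_succ, Fin.succ_pos, if_true,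
    Fin.succ_lt_succ_iff]

theorem psumLt_add_le_sum (μ : Fin d → ℕ) (a : Fin d) :
    psumLt μ a + μ a ≤ ∑ b, μ b := by
  rw [psumLt, add_comm, ← Finset.sum_insert (by simp)]
  exact Finset.sum_le_sum_of_subset (Finset.subset_univ _)

theorem pow_card_ne_zero_sub_one_succ {M : Type} [Monoid M] (z : M) (μ : Fin (d + 1) → ℕ) :
    z ^ ((Finset.univ.filter fun a => μ a ≠ 0).card - 1) =
      (if μ 0 ≠ 0 ∧ ∑ a : Fin d, μ a.succ ≠ 0 then z else 1) *
        z ^ ((Finset.univ.filter fun a : Fin d => μ a.succ ≠ 0).card - 1) := by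
  have hq : ∑ a : Fin d, μ a.succ = 0 ↔
      (Finset.univ.filter fun a : Fin d => μ a.succ ≠ 0).card = 0 := by
    simp [Finset.sum_eq_zero_iff, Finset.filter_eq_empty_iff]
  rw [Fin.card_filter_univ_succ]
  by_cases h0 : μ 0 = 0
  · simp [h0]
  by_cases hc : (Finset.univ.filter fun a : Fin d => μ a.succ ≠ 0).card = 0
  · simp [h0, hc, hq.mpr hc]
  · rw [if_pos h0, if_pos ⟨h0, hq.not.mpr hc⟩, Nat.add_sub_cancel, ← pow_succ',
      Nat.sub_add_cancel (Nat.pos_of_ne_zero hc)]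

end Compositions

theorem list_prod_blockEmb_succ {A : Type} [CommRing A] {u v : A} {d n : ℕ}
    (μ : Fin (d + 1) → ℕ) (hμ : μ 0 + ∑ a : Fin d, μ a.succ = n)
    (x : ∀ a, Hecke A u v (μ a))
    (f : ∀ a, Hecke A u v (μ a) →ₐ[A] Hecke A u v n)
    (hf : ∀ a, IsBlockEmb A u v (μ a) n (psumLt μ a) (f a)) :
    ((List.finRange (d + 1)).map fun a => f a (x a)).prod =
      blockEmb A u v (μ 0) n 0 (by omega) (x 0) * blockEmb A u v _ n (μ 0) hμ.le
        ((List.finRange d).map fun a => blockEmb A u v (μ a.succ) _ (psumLt (fun b => μ b.succ) a)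
          (psumLt_add_le_sum (fun b => μ b.succ) a) (x a.succ)).prod := by
  have hf0 : f 0 = blockEmb A u v (μ 0) n 0 (by omega) := by
    have h := hf 0
    rw [psumLt_zero] at h
    exact IsBlockEmb.eq h (isBlockEmb_blockEmb _)
  have hfs (a : Fin d) : f a.succ = (blockEmb A u v _ n (μ 0) hμ.le).comp
      (blockEmb A u v (μ a.succ) _ _ (psumLt_add_le_sum (fun b => μ b.succ) a)) := by
    have h := hf a.succ
    rw [psumLt_succ] at h
    exact IsBlockEmb.eq h (IsBlockEmb.comp (isBlockEmb_blockEmb _) (isBlockEmb_blockEmb _)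
      (psumLt_add_le_sum (fun b => μ b.succ) a))
  rw [List.finRange_succ, List.map_cons, List.prod_cons, List.map_map, hf0, map_list_prod,
    List.map_map]
  congr 2
  refine List.map_congr_left fun a _ => ?_
  simp only [Function.comp_apply, hfs, AlgHom.comp_apply]

theorem IsNormMarkovH.tau_list_prod_blockEmb {A : Type} [CommRing A] {u v ui vi : A}
    {τ : ∀ m, Hecke A u v m →ₗ[A] A} (hτ : IsNormMarkovH A u v τ) (hu : u * ui = 1)
    (hv : v * vi = 1) {d n : ℕ} (μ : Fin d → ℕ) (hμ : ∑ a, μ a = n)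
    (x : ∀ a : Fin d, Hecke A u v (μ a))
    (f : ∀ a : Fin d, Hecke A u v (μ a) →ₐ[A] Hecke A u v n)
    (hf : ∀ a, IsBlockEmb A u v (μ a) n (psumLt μ a) (f a)) :
    τ n (((List.finRange d).map (fun a => f a (x a))).prod) =
      (vi * (1 - u ^ 2)) ^ ((Finset.univ.filter (fun a : Fin d => μ a ≠ 0)).card - 1) *
        (((List.finRange d).map (fun a => τ (μ a) (x a))).prod) := by
  induction d generalizing n with
  | zero =>
    obtain rfl : n = 0 := by simpa using hμ.symm
    simpa using hτ.tau_algebraMap zero_le_one 1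
  | succ d ih =>
    have hsplit : μ 0 + ∑ a : Fin d, μ a.succ = n := by rw [← hμ, Fin.sum_univ_succ]
    rw [list_prod_blockEmb_succ μ hsplit x f hf, hτ.tau_blockEmb_mul_blockEmb hu hv hsplit,
      ih (fun b => μ b.succ) rfl _ _ fun a => isBlockEmb_blockEmb _, pow_card_ne_zero_sub_one_succ,
      List.finRange_succ, List.map_cons, List.prod_cons, List.map_map, Function.comp_def]
    ring

theorem uL_mul_uLi : uL * uLi = 1 := by
  simp [uL, uLi, AddMonoidAlgebra.of'_apply, AddMonoidAlgebra.single_mul_single,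
    AddMonoidAlgebra.one_def, Prod.mk_zero_zero]

theorem vL_mul_vLi : vL * vLi = 1 := by
  simp [vL, vLi, AddMonoidAlgebra.of'_apply, AddMonoidAlgebra.single_mul_single,
    AddMonoidAlgebra.one_def, Prod.mk_zero_zero]

theorem statement11_general (d : ℕ)
    (τ : ∀ m, Hecke LL uL vL m →ₗ[LL] LL) (hτ : IsNormMarkovH LL uL vL τ)
    (n : ℕ) (μ : Fin d → ℕ) (hμ : ∑ a, μ a = n)
    (x : ∀ a : Fin d, Hecke LL uL vL (μ a))
    (f : ∀ a : Fin d, Hecke LL uL vL (μ a) →ₐ[LL] Hecke LL uL vL n)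
    (hf : ∀ a, IsBlockEmb LL uL vL (μ a) n (psumLt μ a) (f a)) :
    τ n (((List.finRange d).map (fun a => f a (x a))).prod) =
      (vLi * (1 - uL ^ 2)) ^
          ((Finset.univ.filter (fun a : Fin d => μ a ≠ 0)).card - 1) *
        (((List.finRange d).map (fun a => τ (μ a) (x a))).prod) :=
  hτ.tau_list_prod_blockEmb uL_mul_uLi vL_mul_vLi μ hμ x f hf

/-- Lemma 5.1(ii) of the paper:
`τ_n(x_1 ⊗ ⋯ ⊗ x_d) = (v^{-1}(1-u^2))^{|[μ]|-1} τ_{μ_1}(x_1) ⋯ τ_{μ_d}(x_d)`. -/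
theorem statement11 (d : ℕ) [NeZero d]
    (τ : ∀ m, Hecke LL uL vL m →ₗ[LL] LL) (hτ : IsNormMarkovH LL uL vL τ)
    (n : ℕ) (hn : 1 ≤ n) (μ : Fin d → ℕ) (hμ : ∑ a, μ a = n)
    (x : ∀ a : Fin d, Hecke LL uL vL (μ a))
    (f : ∀ a : Fin d, Hecke LL uL vL (μ a) →ₐ[LL] Hecke LL uL vL n)
    (hf : ∀ a, IsBlockEmb LL uL vL (μ a) n (psumLt μ a) (f a)) :
    τ n (((List.finRange d).map (fun a => f a (x a))).prod) =
      (vLi * (1 - uL ^ 2)) ^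
          ((Finset.univ.filter (fun a : Fin d => μ a ≠ 0)).card - 1) *
        (((List.finRange d).map (fun a => τ (μ a) (x a))).prod) :=
  statement11_general d τ hτ n μ hμ x f hf

end YH
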